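/- If real polynomials F and G of degree at most m (with F of degree exactly m) have a common divisor of degree d, then the rank of the Bézout matrix Bez(F,G) is at most m - d. -/

import Mathlib

open Polynomial

/-- The Bézoutian of `F` and `G`: the bivariate polynomial
`(F(x)G(y) - F(y)G(x))/(x - y)`, represented as an element of `(ℝ[X])[Y]`
where the inner variable is `x` and the outer variable is `y`. -/
noncomputable def bezoutian (F G : ℝ[X]) : Polynomial ℝ[X] :=
  -((Polynomial.C F * G.map Polynomial.C - F.map Polynomial.C * Polynomial.C G) /ₘ
      (Polynomial.X - Polynomial.C Polynomial.X))

/-- The `m × m` Bézout matrix of `F` and `G`: entry `(i, j)` (0-based) is the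
coefficient of `x^i y^j` in the Bézoutian. -/
noncomputable def bezMat (m : ℕ) (F G : ℝ[X]) : Matrix (Fin m) (Fin m) ℝ :=
  fun i j => ((bezoutian F G).coeff (j : ℕ)).coeff (i : ℕ)

/-! Writing `F = D F₁` and `G = D G₁`, the Bézoutian factors as
`Bez(F, G)(x, y) = D(x) Bez(F₁, G₁)(x, y) D(y)`, and `Bez(F₁, G₁)` has degree `< m - d`
in `y`. Hence every coefficient of `y^j` in `Bez(F, G)`, i.e. every column of the Bézout
matrix, is a linear combination of the `m - d` polynomials `D(x) [y^l] Bez(F₁, G₁)`,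
`l < m - d`. -/

section CoeffMatrix

variable {K : Type*}

noncomputable def coeffMatrix [Semiring K] (m : ℕ) (P : K[X][X]) : Matrix (Fin m) (Fin m) K :=
  Matrix.of fun i j => (P.coeff j).coeff i

theorem coeff_mul_map_C_mem_span [CommSemiring K] {n : ℕ} {Q : K[X][X]} (hQ : Q.degree < n)
    (E : K[X]) (j : ℕ) :
    (Q * E.map C).coeff j ∈ Submodule.span K (Set.range fun l : Fin n => Q.coeff l) := by
  rw [coeff_mul]
  refine Submodule.sum_mem _ fun x _ => ?_
  rw [coeff_map, mul_comm, ← smul_eq_C_mul]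
  refine Submodule.smul_mem _ _ ?_
  by_cases hx : x.1 < n
  · exact Submodule.subset_span ⟨⟨x.1, hx⟩, rfl⟩
  · rw [coeff_eq_zero_of_degree_lt (hQ.trans_le (by exact_mod_cast not_lt.mp hx))]
    exact Submodule.zero_mem _

theorem rank_coeffMatrix_le [Field K] {m n : ℕ} {P : K[X][X]} (v : Fin n → K[X])
    (hP : ∀ j, P.coeff j ∈ Submodule.span K (Set.range v)) :
    (coeffMatrix m P).rank ≤ n := by
  let T : K[X] →ₗ[K] Fin m → K := LinearMap.pi fun i => lcoeff K i
  have hcols : Submodule.span K (Set.range (coeffMatrix m P).col)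
      ≤ Submodule.span K (Set.range (T ∘ v)) := by
    rw [Submodule.span_le, Set.range_comp, Submodule.span_image]
    rintro _ ⟨j, rfl⟩
    exact ⟨_, hP j, rfl⟩
  rw [Matrix.rank_eq_finrank_span_cols]
  exact (Submodule.finrank_mono hcols).trans
    ((finrank_range_le_card _).trans_eq (Fintype.card_fin n))

end CoeffMatrix

theorem X_sub_C_X_mul_bezoutian (F G : ℝ[X]) :
    (X - C X) * bezoutian F G = -(C F * G.map C - F.map C * C G) := by
  have hroot : (C F * G.map C - F.map C * C G).IsRoot X := by
    simp [eval_map, eval₂_C_X, mul_comm]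
  rw [bezoutian]
  linear_combination -mul_divByMonic_eq_iff_isRoot.mpr hroot

theorem bezoutian_mul_mul (D F G : ℝ[X]) :
    bezoutian (D * F) (D * G) = C D * bezoutian F G * D.map C := by
  refine mul_left_cancel₀ (monic_X_sub_C (X : ℝ[X])).ne_zero ?_
  rw [X_sub_C_X_mul_bezoutian, show (X - C X) * (C D * bezoutian F G * D.map C)
    = C D * ((X - C X) * bezoutian F G) * D.map C by ring, X_sub_C_X_mul_bezoutian]
  simp only [Polynomial.map_mul, map_mul]
  ring

theorem degree_bezoutian_lt {n : ℕ} {F G : ℝ[X]} (hF : F.natDegree ≤ n)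
    (hG : G.natDegree ≤ n) :
    (bezoutian F G).degree < n := by
  set p := C F * G.map C - F.map C * C G
  rcases eq_or_ne p 0 with hp | hp
  · simp [bezoutian, p, hp]
  have hpn : p.natDegree ≤ n := by
    refine (natDegree_sub_le _ _).trans (max_le ?_ ?_)
    · exact natDegree_C_mul_le _ _ |>.trans (natDegree_map_le.trans hG)
    · exact natDegree_mul_C_le _ _ |>.trans (natDegree_map_le.trans hF)
  rw [bezoutian, degree_neg]
  calc (p /ₘ (X - C X)).degree < p.degree := degree_divByMonic_lt _ _ hp (by simp)
    _ ≤ n := degree_le_of_natDegree_le hpn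

theorem natDegree_le_sub_of_mul_left {R : Type*} [Semiring R] [NoZeroDivisors R]
    {D Q : R[X]} {k : ℕ} (hD : D ≠ 0) (h : (D * Q).natDegree ≤ k) :
    Q.natDegree ≤ k - D.natDegree := by
  rcases eq_or_ne Q 0 with rfl | hQ
  · simp
  · rw [natDegree_mul hD hQ] at h
    omega

theorem bezMat_eq_coeffMatrix (m : ℕ) (F G : ℝ[X]) :
    bezMat m F G = coeffMatrix m (bezoutian F G) :=
  rfl

theorem bezMat_rank_le_of_common_divisor (m d : ℕ) (F G D : ℝ[X])
    (hF : F.natDegree = m) (hG : G.natDegree ≤ m)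
    (hDF : D ∣ F) (hDG : D ∣ G) (hd : D.natDegree = d) :
    (bezMat m F G).rank ≤ m - d := by
  obtain ⟨F₁, rfl⟩ := hDF
  obtain ⟨G₁, rfl⟩ := hDG
  rcases eq_or_ne D 0 with rfl | hD
  · simp only [zero_mul, natDegree_zero] at hF
    subst hF
    exact (Matrix.rank_le_width _).trans_eq (by simp)
  subst hd
  have hB := degree_bezoutian_lt (natDegree_le_sub_of_mul_left hD hF.le)
    (natDegree_le_sub_of_mul_left hD hG)
  rw [bezMat_eq_coeffMatrix, bezoutian_mul_mul]
  exact rank_coeffMatrix_le _ (coeff_mul_map_C_mem_span ((degree_C_mul hD).trans_lt hB) D)
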